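/- Let Φ ∈ C(Ω, X)*_1 be a w*-w point of continuity, written (as guaranteed by the structure theorem) as Φ = ∑_{i=1}^∞ α_i (δ_{k_i} ⊗ x_i*) with α_i ∈ (0,1], ∑ α_i = 1, k_i distinct isolated points of Ω, and x_i* ∈ S(X*). If Φ attains its norm at some f in the unit sphere of C(Ω, X), then x_i*(f(k_i)) = 1 for every i, each x_i* attains its norm on the countable set A = {f(k_i) : i ∈ ℕ} ⊆ X_1, and the closure of A in X is norm compact. -/

import Mathlib

/-! `Φ f = ∑ αᵢ xᵢ*(f(kᵢ))` is a convex combination of numbers `xᵢ*(f(kᵢ)) ≤ ‖f(kᵢ)‖ ≤ 1` that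
equals `1`, so every one of them equals `1`. The set `{f(kᵢ)}` lies in the compact set `f(Ω)`. -/

open NormedSpace Filter Topology

variable {Ω : Type*} [TopologicalSpace Ω] [CompactSpace Ω]
variable {X : Type*} [NormedAddCommGroup X] [NormedSpace ℝ X]

/-- The functional `δ_ω ⊗ x* : f ↦ x*(f ω)` on `C(Ω, X)`. -/
noncomputable def deltaTensor (ω : Ω) (x : StrongDual ℝ X) : StrongDual ℝ C(Ω, X) :=
  LinearMap.mkContinuous
    { toFun := fun f : C(Ω, X) => x (f ω)
      map_add' := fun f g => by simp
      map_smul' := fun c f => by simp }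
    ‖x‖ (fun f => by
      calc ‖x (f ω)‖ ≤ ‖x‖ * ‖f ω‖ := x.le_opNorm _
        _ ≤ ‖x‖ * ‖f‖ :=
          mul_le_mul_of_nonneg_left (f.norm_coe_le_norm ω) (norm_nonneg x))

/-- Nets are encoded as filters: every filter on the dual unit ball converging weak\* to `x*`
converges weakly to `x*`. -/
def IsWStarWPC {E : Type*} [NormedAddCommGroup E] [NormedSpace ℝ E]
    (x : StrongDual ℝ E) : Prop :=
  ∀ l : Filter (StrongDual ℝ E), l.NeBot → (∀ᶠ φ in l, ‖φ‖ ≤ 1) →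
    (∀ v : E, Tendsto (fun φ : StrongDual ℝ E => φ v) l (𝓝 (x v))) →
    ∀ Λ : StrongDual ℝ (StrongDual ℝ E), Tendsto (fun φ : StrongDual ℝ E => Λ φ) l (𝓝 (Λ x))

theorem HasSum.eq_of_le {ι α : Type*} [AddCommGroup α] [PartialOrder α] [IsOrderedAddMonoid α]
    [TopologicalSpace α] [IsTopologicalAddGroup α] [OrderClosedTopology α] {f g : ι → α} {a : α}
    (hf : HasSum f a) (hg : HasSum g a) (hfg : f ≤ g) : f = g := by
  by_contra hne
  obtain ⟨i, hi⟩ := Function.ne_iff.mp hne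
  exact (hasSum_lt hfg (lt_of_le_of_ne (hfg i) hi) hf hg).false

theorem eq_one_of_tsum_mul_eq_one {ι : Type*} {α t : ι → ℝ} (hα : ∀ i, 0 < α i)
    (hαsum : HasSum α 1) (ht : ∀ i, t i ≤ 1) (h : ∑' i, α i * t i = 1) (i : ι) : t i = 1 := by
  -- a non-summable `tsum` is the junk value `0`, so `h` forces summability
  have hsummable : Summable fun i => α i * t i := by
    by_contra hns
    rw [tsum_eq_zero_of_not_summable hns] at h
    exact zero_ne_one h
  have hle : (fun i => α i * t i) ≤ α := fun i =>
    mul_le_of_le_one_right (hα i).le (ht i)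
  have heq := (h ▸ hsummable.hasSum).eq_of_le hαsum hle
  exact (mul_eq_left₀ (hα i).ne').mp (congrFun heq i)

@[simp]
theorem deltaTensor_apply (ω : Ω) (x : StrongDual ℝ X) (f : C(Ω, X)) :
    deltaTensor ω x f = x (f ω) :=
  rfl

theorem norm_attaining_wStarWPC_necessary_general
    (Φ : StrongDual ℝ C(Ω, X))
    (α : ℕ → ℝ) (hα : ∀ i, α i ∈ Set.Ioc (0 : ℝ) 1) (hαsum : HasSum α 1)
    (k : ℕ → Ω)
    (x : ℕ → StrongDual ℝ X) (hx : ∀ i, ‖x i‖ = 1)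
    (hrep : ∀ f : C(Ω, X), Φ f = ∑' i, α i * (deltaTensor (k i) (x i)) f)
    (f : C(Ω, X)) (hf : ‖f‖ = 1) (hatt : Φ f = 1) :
    (∀ i, (x i) (f (k i)) = 1) ∧
      (∀ i, ‖f (k i)‖ ≤ 1) ∧
      IsCompact (closure (Set.range fun i => f (k i))) := by
  have hball : ∀ i, ‖f (k i)‖ ≤ 1 := fun i => hf ▸ f.norm_coe_le_norm (k i)
  have hle : ∀ i, x i (f (k i)) ≤ 1 := fun i =>
    (le_abs_self _).trans <| by simpa using (x i).le_of_opNorm_le_of_le (hx i).le (hball i)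
  have hconv : ∑' i, α i * x i (f (k i)) = 1 := by
    simpa only [hrep, deltaTensor_apply] using hatt
  refine ⟨eq_one_of_tsum_mul_eq_one (fun i => (hα i).1) hαsum hle hconv, hball, ?_⟩
  exact (isCompact_range f.continuous).closure_of_subset (Set.range_comp_subset_range k f)

/-- **Necessary conditions for norm attainment of a w\*-w PC.**  Let
`Φ = ∑ α_i (δ_{k_i} ⊗ x_i*)` be a w\*-w PC in the dual unit ball of `C(Ω, X)` with
`α_i ∈ (0, 1]`, `∑ α_i = 1`, `k_i` distinct isolated points and `x_i* ∈ S(X*)`.  If `Φ`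
attains its norm at `f ∈ S(C(Ω, X))` (`Φ f = ‖Φ‖ = 1`), then `x_i*(f(k_i)) = 1` for every
`i` (so each `x_i*` attains its norm on the countable set `A = {f(k_i)} ⊆ X₁`) and the
closure of `A` is norm compact. -/
theorem norm_attaining_wStarWPC_necessary [T2Space Ω] [CompleteSpace X]
    (Φ : StrongDual ℝ C(Ω, X)) (hΦball : ‖Φ‖ ≤ 1) (hpc : IsWStarWPC Φ)
    (α : ℕ → ℝ) (hα : ∀ i, α i ∈ Set.Ioc (0 : ℝ) 1) (hαsum : HasSum α 1)
    (k : ℕ → Ω) (hk : Function.Injective k) (hiso : ∀ i, IsOpen ({k i} : Set Ω))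
    (x : ℕ → StrongDual ℝ X) (hx : ∀ i, ‖x i‖ = 1)
    (hrep : ∀ f : C(Ω, X), Φ f = ∑' i, α i * (deltaTensor (k i) (x i)) f)
    (f : C(Ω, X)) (hf : ‖f‖ = 1) (hatt : Φ f = 1) :
    (∀ i, (x i) (f (k i)) = 1) ∧
      (∀ i, ‖f (k i)‖ ≤ 1) ∧
      IsCompact (closure (Set.range fun i => f (k i))) :=
  norm_attaining_wStarWPC_necessary_general Φ α hα hαsum k x hx hrep f hf hatt
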